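/- arXiv:math/0604395 — 3 statements merged into one kernel-verified Lean document; each statement's English description precedes it below -/
import Mathlib

section
/- Let Z be a Parisian walk with deterministic starting point Z_0, and suppose the filtration is the natural filtration of Z, i.e. ℱ_t = σ(Z_0, …, Z_t). Fix t ∈ ℕ and for S = (s_1, …, s_t) ∈ {1, ζ, ζ²}^t define ΔZ_S := ∏_{i : s_i = ζ} ΔZ_i · ∏_{i : s_i = ζ²} conj(ΔZ_i), where ΔZ_i := Z_i − Z_{i−1}. Then the family {ΔZ_S : S ∈ {1, ζ, ζ²}^t} is an orthonormal basis of the complex Hilbert space L²(Ω, ℱ_t, P; ℂ); in particular this space has dimension 3^t. -/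
open MeasureTheory Complex
open scoped Classical

noncomputable section

namespace Parisian

/-- The primitive cube root of unity `ζ = (−1 + √3·i)/2`. -/
def zeta : ℂ := (-1 + Real.sqrt 3 * Complex.I) / 2

/-- The lattice `ℤ[ζ] = {a + bζ : a, b ∈ ℤ}` as a subset of `ℂ`. -/
def Zlat : Set ℂ := {z | ∃ a b : ℤ, z = (a : ℂ) + (b : ℂ) * zeta}

/-- The set of admissible steps `{1, ζ, ζ²}`. -/
def steps : Set ℂ := {1, zeta, zeta ^ 2}

/-- The set `P = {0, 1, 1 + ζ}`. -/
def Pset : Set ℂ := {0, 1, 1 + zeta}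

/-- Graph distance from the set `P` in `ℤ[ζ]`: the least `n` such that
`z = p + w₁ + ⋯ + w_n` with `p ∈ P` and each `wᵢ ∈ {1, ζ, ζ²}`. -/
def gdist (z : ℂ) : ℕ :=
  sInf {n : ℕ | ∃ p ∈ Pset, ∃ w : Fin n → ℂ, (∀ i, w i ∈ steps) ∧ z = p + ∑ i, w i}

def A1 : Set ℂ := {z | ∃ k1 k2 : ℤ, z = (k1 : ℂ) + (k2 : ℂ) * zeta ^ 2 ∧ 1 < k2 + 1 ∧ k2 + 1 < k1}
def A2 : Set ℂ := {z | ∃ k1 k2 : ℤ, z = -(k1 : ℂ) * zeta - (k2 : ℂ) ∧ 0 ≤ k2 ∧ k2 < k1}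
def A3 : Set ℂ := {z | ∃ k1 k2 : ℤ, z = -(k1 : ℂ) - (k2 : ℂ) * zeta ∧ 0 < k2 ∧ k2 < k1}
def A4 : Set ℂ := {z | ∃ k1 k2 : ℤ, z = (k1 : ℂ) * zeta + (k2 : ℂ) * zeta ^ 2 ∧ 0 ≤ k2 ∧ k2 < k1}
def A5 : Set ℂ := {z | ∃ k1 k2 : ℤ, z = -(k1 : ℂ) * zeta ^ 2 - (k2 : ℂ) ∧ 1 < k2 + 1 ∧ k2 + 1 < k1}
def A6 : Set ℂ := {z | ∃ k1 k2 : ℤ, z = (k1 : ℂ) + (k2 : ℂ) * zeta ∧ 0 < k2 ∧ k2 < k1}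

def B1 : Set ℂ := {z | ∃ n : ℤ, z = (n : ℂ) ∧ 2 ≤ n}
def B2 : Set ℂ := {z | ∃ n : ℤ, z = (n : ℂ) * zeta - zeta ^ 2 ∧ 1 ≤ n}
def B3 : Set ℂ := {z | ∃ n : ℤ, z = (n : ℂ) * zeta ^ 2 ∧ 1 ≤ n}
def B4 : Set ℂ := {z | ∃ n : ℤ, z = (n : ℂ) ∧ n ≤ -1}
def B5 : Set ℂ := {z | ∃ n : ℤ, z = 1 + (n : ℂ) * zeta ∧ n ≤ -1}
def B6 : Set ℂ := {z | ∃ n : ℤ, z = (n : ℂ) * zeta ^ 2 ∧ n ≤ -2}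

/-- The closure `Ā₁ = A₁ ∪ B₁ ∪ B₅ ∪ {1}`. -/
def Abar1 : Set ℂ := A1 ∪ B1 ∪ B5 ∪ {1}
/-- The closure `Ā₃ = A₃ ∪ B₃ ∪ B₄ ∪ {0}`. -/
def Abar3 : Set ℂ := A3 ∪ B3 ∪ B4 ∪ {0}
/-- The closure `Ā₅ = A₅ ∪ B₂ ∪ B₆ ∪ {1+ζ}`. -/
def Abar5 : Set ℂ := A5 ∪ B2 ∪ B6 ∪ {1 + zeta}

/-- `φ(z) = 1_{Ā₁}(z) + ζ·1_{Ā₃}(z) + ζ²·1_{Ā₅}(z)`. -/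
def phi (z : ℂ) : ℂ :=
  Abar1.indicator 1 z + zeta * Abar3.indicator 1 z + zeta ^ 2 * Abar5.indicator 1 z

/-- `ψ(z) = 1_{A₆}(z) + ζ·1_{A₄}(z) + ζ²·1_{A₂}(z)`. -/
def psi (z : ℂ) : ℂ :=
  A6.indicator 1 z + zeta * A4.indicator 1 z + zeta ^ 2 * A2.indicator 1 z

variable {Ω : Type*} {mΩ : MeasurableSpace Ω}

/-- A Parisian walk: an adapted integrable martingale starting in `ℤ[ζ]` a.s.,
with increments in `{1, ζ, ζ²}` a.s. -/
def IsParisian (μ : Measure Ω) (ℱ : Filtration ℕ mΩ) (Z : ℕ → Ω → ℂ) : Prop :=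
  Martingale Z ℱ μ ∧ (∀ᵐ ω ∂μ, Z 0 ω ∈ Zlat) ∧
    ∀ t : ℕ, ∀ᵐ ω ∂μ, Z (t + 1) ω - Z t ω ∈ steps

/-- The local time of a walk: the number of exits from `Ā₁`, `Ā₃`, `Ā₅` before time `t`. -/
def localTime (Z : ℕ → Ω → ℂ) (t : ℕ) (ω : Ω) : ℕ :=
  ∑ u ∈ Finset.range t,
    ((if Z u ω ∈ Abar1 ∧ Z (u + 1) ω ∉ Abar1 then 1 else 0) +
     (if Z u ω ∈ Abar3 ∧ Z (u + 1) ω ∉ Abar3 then 1 else 0) +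
     (if Z u ω ∈ Abar5 ∧ Z (u + 1) ω ∉ Abar5 then 1 else 0))

/-- `ΔZ_S = ∏_{i : sᵢ = ζ} ΔZᵢ · ∏_{i : sᵢ = ζ²} conj(ΔZᵢ)` where `ΔZᵢ = Zᵢ − Z_{i−1}`,
for a tuple `S : Fin t → ℂ` (with entries in `{1, ζ, ζ²}`). -/
def deltaZS (Z : ℕ → Ω → ℂ) (t : ℕ) (S : Fin t → ℂ) (ω : Ω) : ℂ :=
  ∏ i : Fin t,
    (if S i = zeta then Z ((i : ℕ) + 1) ω - Z (i : ℕ) ω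
     else if S i = zeta ^ 2 then starRingEnd ℂ (Z ((i : ℕ) + 1) ω - Z (i : ℕ) ω)
     else 1)

end Parisian

namespace Parisian

/-- Enumeration of `{1, ζ, ζ²}` by `Fin 3`. -/
def trip : Fin 3 → ℂ := ![1, zeta, zeta ^ 2]

/-! On the full-measure event where every increment is a cube root of unity, `ΔZ_S` is the
character `v ↦ ∏ vᵢ ^ Sᵢ` of `μ₃ᵗ` (with `S ∈ (ℤ/3ℤ)ᵗ`) evaluated at the increment vector, and
`ΔZ_S · conj ΔZ_{S'} = ΔZ_{S - S'}`. Orthonormality thus reduces to `E[ΔZ_S] = 0` for `S ≠ 0`: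
splitting off the last coordinate, either it is trivial and we induct, or the last factor is
`ΔZ_u` or `conj ΔZ_u`, which integrates to zero against any bounded `ℱ_u`-measurable multiplier
by the martingale property. For completeness, since the start is deterministic, a function
measurable for the natural filtration factors through the increment vector, and every function
on `μ₃ᵗ` is a combination of characters by Fourier inversion. -/

end Parisian

namespace MeasureTheory.Martingale

variable {Ω ι : Type*} {mΩ : MeasurableSpace Ω} {μ : Measure Ω} [IsFiniteMeasure μ] [Preorder ι]
  {ℱ : Filtration ι mΩ} {i j : ι} {C : ℝ}

theorem integral_mul_sub_eq_zero {A : Type*} [NormedRing A] [NormedAlgebra ℝ A] [CompleteSpace A]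
    {Z : ι → Ω → A} {G : Ω → A} (hZ : Martingale Z ℱ μ) (hij : i ≤ j)
    (hG : StronglyMeasurable[ℱ i] G) (hGC : ∀ᵐ ω ∂μ, ‖G ω‖ ≤ C) :
    ∫ ω, G ω * (Z j ω - Z i ω) ∂μ = 0 := by
  have hGZ : ∀ k, Integrable (fun ω => G ω * Z k ω) μ := fun k =>
    (hZ.integrable k).bdd_mul (hG.mono (ℱ.le i)).aestronglyMeasurable hGC
  have hpull : μ[fun ω => G ω * Z j ω | ℱ i] =ᵐ[μ] fun ω => G ω * Z i ω := by
    filter_upwards [condExp_bilin_of_stronglyMeasurable_left (ContinuousLinearMap.mul ℝ A) hG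
      (hGZ j) (hZ.integrable j), hZ.condExp_ae_eq hij] with ω hpull hmart
    simpa [hmart] using hpull
  simp_rw [mul_sub]
  rw [integral_sub (hGZ j) (hGZ i), ← integral_condExp (ℱ.le i), integral_congr_ae hpull,
    sub_self]

theorem integral_mul_conj_sub_eq_zero {𝕜 : Type*} [RCLike 𝕜] {Z : ι → Ω → 𝕜} {G : Ω → 𝕜}
    (hZ : Martingale Z ℱ μ) (hij : i ≤ j)
    (hG : StronglyMeasurable[ℱ i] G) (hGC : ∀ᵐ ω ∂μ, ‖G ω‖ ≤ C) :
    ∫ ω, G ω * starRingEnd 𝕜 (Z j ω - Z i ω) ∂μ = 0 := by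
  have h := hZ.integral_mul_sub_eq_zero hij (RCLike.continuous_conj.comp_stronglyMeasurable hG)
    (hGC.mono fun ω hω => by simpa using hω)
  calc ∫ ω, G ω * starRingEnd 𝕜 (Z j ω - Z i ω) ∂μ
      = starRingEnd 𝕜 (∫ ω, starRingEnd 𝕜 (G ω) * (Z j ω - Z i ω) ∂μ) := by
        rw [← integral_conj]; simp
    _ = 0 := by rw [h, map_zero]

end MeasureTheory.Martingale

namespace Parisian

open ComplexConjugate

theorem zeta_sq_add_zeta_add_one : zeta ^ 2 + zeta + 1 = 0 := by
  have h3 : (Real.sqrt 3 : ℂ) ^ 2 = 3 := by norm_cast; simp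
  simp only [zeta]
  linear_combination ((Real.sqrt 3 : ℂ) ^ 2 / 4) * Complex.I_sq - h3 / 4

theorem zeta_pow_three : zeta ^ 3 = 1 := by
  linear_combination (zeta - 1) * zeta_sq_add_zeta_add_one

theorem pow_three_eq_one_of_mem_steps {x : ℂ} (hx : x ∈ steps) : x ^ 3 = 1 := by
  rcases hx with rfl | rfl | rfl
  · exact one_pow 3
  · exact zeta_pow_three
  · rw [← pow_mul, pow_mul', zeta_pow_three, one_pow]

theorem zeta_ne_one : zeta ≠ 1 := fun h => by
  have key := zeta_sq_add_zeta_add_one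
  norm_num [h] at key

theorem zeta_sq_ne_one : zeta ^ 2 ≠ 1 := fun h =>
  zeta_ne_one (by linear_combination zeta_pow_three - zeta * h)

theorem zeta_sq_ne_zeta : zeta ^ 2 ≠ zeta := fun h =>
  zeta_ne_one (by linear_combination zeta_pow_three - (zeta + 1) * h)

theorem conj_mul_self_of_pow_three_eq_one {x : ℂ} (hx : x ^ 3 = 1) : conj x * x = 1 := by
  rw [Complex.conj_mul', norm_eq_one_of_pow_eq_one hx three_ne_zero]; simp

theorem conj_eq_sq_of_pow_three_eq_one {x : ℂ} (hx : x ^ 3 = 1) : conj x = x ^ 2 := by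
  linear_combination x ^ 2 * conj_mul_self_of_pow_three_eq_one hx - conj x * hx

theorem sum_conj_pow_mul_pow {x y : ℂ} (hx : x ^ 3 = 1) (hy : y ^ 3 = 1) :
    ∑ a : Fin 3, conj x ^ (a : ℕ) * y ^ (a : ℕ) = if x = y then 3 else 0 := by
  have hxx := conj_mul_self_of_pow_three_eq_one hx
  simp only [← mul_pow, Fin.sum_univ_three, Fin.val_zero, Fin.val_one, Fin.val_two, pow_zero,
    pow_one]
  split_ifs with hxy
  · subst hxy; rw [hxx]; norm_num
  · have hw1 : conj x * y - 1 ≠ 0 := fun h => hxy (by linear_combination y * hxx - x * h)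
    have hw3 : (conj x * y) ^ 3 = 1 := by rw [mul_pow, ← map_pow, hx, hy, map_one, one_mul]
    refine mul_left_cancel₀ hw1 ?_
    linear_combination hw3

-- The characters of `μ₃ᵗ`, indexed by exponent vectors `S ∈ (ℤ/3ℤ)ᵗ`.
def character {t : ℕ} (S : Fin t → Fin 3) (v : Fin t → ℂ) : ℂ := ∏ i, v i ^ (S i : ℕ)

section character

variable {t : ℕ} {v w : Fin t → ℂ}

@[simp]
theorem character_zero (v : Fin t → ℂ) : character 0 v = 1 := by simp [character]

theorem character_succ (S : Fin (t + 1) → Fin 3) (v : Fin (t + 1) → ℂ) :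
    character S v = character (Fin.init S) (Fin.init v) * v (Fin.last t) ^ (S (Fin.last t) : ℕ) :=
  Fin.prod_univ_castSucc _

theorem norm_character (S : Fin t → Fin 3) (hv : ∀ i, v i ^ 3 = 1) : ‖character S v‖ = 1 := by
  simp [character, norm_eq_one_of_pow_eq_one (hv _) three_ne_zero]

theorem character_mul_conj_character (S S' : Fin t → Fin 3) (hv : ∀ i, v i ^ 3 = 1) :
    character S v * conj (character S' v) = character (S - S') v := by
  simp only [character, map_prod, map_pow, ← Finset.prod_mul_distrib]
  refine Finset.prod_congr rfl fun i _ => ?_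
  rw [conj_eq_sq_of_pow_three_eq_one (hv i), ← pow_mul, ← pow_add, pow_eq_pow_mod _ (hv i),
    Pi.sub_apply, Fin.val_sub]
  congr 1
  omega

theorem sum_conj_character_mul_character (hv : ∀ i, v i ^ 3 = 1) (hw : ∀ i, w i ^ 3 = 1) :
    ∑ S, conj (character S v) * character S w = if v = w then 3 ^ t else 0 := by
  calc ∑ S, conj (character S v) * character S w
      = ∑ S : Fin t → Fin 3, ∏ i, conj (v i) ^ (S i : ℕ) * w i ^ (S i : ℕ) := by
        simp [character, map_prod, Finset.prod_mul_distrib]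
    _ = ∏ i, ∑ a : Fin 3, conj (v i) ^ (a : ℕ) * w i ^ (a : ℕ) := by
        rw [Fintype.prod_sum]
    _ = ∏ i, if v i = w i then 3 else 0 := by simp only [sum_conj_pow_mul_pow (hv _) (hw _)]
    _ = if v = w then 3 ^ t else 0 := by simp [Finset.prod_ite_zero, funext_iff]

theorem exists_eq_sum_character (g : (Fin t → ℂ) → ℂ) :
    ∃ c : (Fin t → Fin 3) → ℂ, ∀ v, (∀ i, v i ^ 3 = 1) → g v = ∑ S, c S * character S v := by
  set P := Fintype.piFinset fun _ : Fin t => Polynomial.nthRootsFinset 3 (1 : ℂ)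
  have hP : ∀ u, u ∈ P ↔ ∀ i, u i ^ 3 = 1 := by
    simp [P, Polynomial.mem_nthRootsFinset]
  refine ⟨fun S => (3 ^ t)⁻¹ * ∑ u ∈ P, conj (character S u) * g u, fun v hv => ?_⟩
  calc g v = (3 ^ t)⁻¹ * ∑ u ∈ P, (if u = v then 3 ^ t else 0) * g u := by
        simp [Finset.sum_ite_eq', (hP v).2 hv]
    _ = (3 ^ t)⁻¹ * ∑ u ∈ P, (∑ S, conj (character S u) * character S v) * g u := by
        congr 1
        refine Finset.sum_congr rfl fun u hu => ?_
        rw [sum_conj_character_mul_character ((hP u).1 hu) hv]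
    _ = ∑ S, ((3 ^ t)⁻¹ * ∑ u ∈ P, conj (character S u) * g u) * character S v := by
        simp only [Finset.sum_mul, Finset.mul_sum]
        rw [Finset.sum_comm]
        refine Finset.sum_congr rfl fun S _ => Finset.sum_congr rfl fun u _ => ?_
        ring

end character

theorem ite_trip_eq_pow (a : Fin 3) {d : ℂ} (hd : d ^ 3 = 1) :
    (if trip a = zeta then d else if trip a = zeta ^ 2 then conj d else 1) = d ^ (a : ℕ) := by
  fin_cases a <;>
    simp [trip, zeta_ne_one.symm, zeta_sq_ne_one.symm, zeta_sq_ne_zeta,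
      conj_eq_sq_of_pow_three_eq_one hd]

section walk

variable {Ω : Type*} {mΩ : MeasurableSpace Ω}

def increments (Z : ℕ → Ω → ℂ) (t : ℕ) (ω : Ω) : Fin t → ℂ := fun i => Z (i + 1) ω - Z i ω

variable {Z : ℕ → Ω → ℂ}

theorem deltaZS_eq_character {t : ℕ} {ω : Ω} (hω : ∀ i, increments Z t ω i ^ 3 = 1)
    (S : Fin t → Fin 3) : deltaZS Z t (trip ∘ S) ω = character S (increments Z t ω) :=
  Finset.prod_congr rfl fun i _ => ite_trip_eq_pow (S i) (hω i)

theorem stronglyMeasurable_character_increments {ℱ : Filtration ℕ mΩ}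
    (hZ : StronglyAdapted ℱ Z) {t : ℕ} (S : Fin t → Fin 3) :
    StronglyMeasurable[ℱ t] fun ω => character S (increments Z t ω) := by
  refine Finset.stronglyMeasurable_fun_prod _ fun i _ => ?_
  have hi : (i : ℕ) + 1 ≤ t := i.isLt
  exact (((hZ _).mono (ℱ.mono hi)).sub ((hZ _).mono (ℱ.mono (by omega)))).pow _

theorem integral_character_increments_eq_zero {μ : Measure Ω} [IsFiniteMeasure μ]
    {ℱ : Filtration ℕ mΩ} (hZ : Martingale Z ℱ μ)
    (hcube : ∀ᵐ ω ∂μ, ∀ u, (Z (u + 1) ω - Z u ω) ^ 3 = 1) {t : ℕ} {S : Fin t → Fin 3}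
    (hS : S ≠ 0) : ∫ ω, character S (increments Z t ω) ∂μ = 0 := by
  induction t with
  | zero => exact absurd (Subsingleton.elim S 0) hS
  | succ t ih =>
    have hsplit : ∀ ω, character S (increments Z (t + 1) ω) =
        character (Fin.init S) (increments Z t ω) * (Z (t + 1) ω - Z t ω) ^ (S (Fin.last t) : ℕ) :=
      fun ω => character_succ S _
    simp_rw [hsplit]
    have hG := stronglyMeasurable_character_increments hZ.stronglyAdapted (Fin.init S)
    have hGC : ∀ᵐ ω ∂μ, ‖character (Fin.init S) (increments Z t ω)‖ ≤ 1 :=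
      hcube.mono fun ω hω => (norm_character _ fun i => hω i).le
    obtain h | h | h : S (Fin.last t) = 0 ∨ S (Fin.last t) = 1 ∨ S (Fin.last t) = 2 := by
      generalize S (Fin.last t) = a; fin_cases a <;> simp
    · simp only [h, Fin.val_zero, pow_zero, mul_one]
      refine ih fun hinit => hS (funext fun i => ?_)
      refine Fin.lastCases ?_ (fun j => ?_) i
      · exact h
      · exact congrFun hinit j
    · simpa [h] using hZ.integral_mul_sub_eq_zero t.le_succ hG hGC
    · rw [← hZ.integral_mul_conj_sub_eq_zero t.le_succ hG hGC]
      refine integral_congr_ae (hcube.mono fun ω hω => ?_)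
      simp [h, conj_eq_sq_of_pow_three_eq_one (hω t)]

theorem measurable_comap_increments {z0 : ℂ} (hz0 : ∀ ω, Z 0 ω = z0) {s t : ℕ} (hst : s ≤ t) :
    Measurable[MeasurableSpace.comap (increments Z t) inferInstance] (Z s) := by
  have hZs : Z s = fun ω => z0 + ∑ i ∈ Finset.range s, (Z (i + 1) ω - Z i ω) := by
    funext ω; rw [Finset.sum_range_sub (Z · ω), hz0]; ring
  rw [hZs]
  refine measurable_const.add (Finset.measurable_sum _ fun i hi => ?_)
  have hit : i < t := (Finset.mem_range.mp hi).trans_le hst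
  exact (measurable_pi_apply (⟨i, hit⟩ : Fin t)).comp (comap_measurable (increments Z t))

theorem iSup_comap_le_comap_increments {z0 : ℂ} (hz0 : ∀ ω, Z 0 ω = z0) (t : ℕ) :
    ⨆ s ∈ Set.Iic t, MeasurableSpace.comap (Z s) inferInstance
      ≤ MeasurableSpace.comap (increments Z t) inferInstance :=
  iSup₂_le fun _ hs => (measurable_comap_increments hz0 hs).comap_le

end walk

/-- For a Parisian walk with deterministic start and natural filtration, the family
`{ΔZ_S : S ∈ {1, ζ, ζ²}^t}` is an orthonormal basis of `L²(Ω, ℱ_t, P; ℂ)`: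
it is orthonormal, and every `ℱ_t`-measurable square-integrable function is
(a.e.) a linear combination of the `3^t` functions `ΔZ_S`. -/
theorem deltaZS_orthonormal_basis
    {Ω : Type*} {mΩ : MeasurableSpace Ω} (μ : Measure Ω) [IsProbabilityMeasure μ]
    (ℱ : Filtration ℕ mΩ) (Z : ℕ → Ω → ℂ) (hZ : IsParisian μ ℱ Z)
    (z0 : ℂ) (hz0 : ∀ ω, Z 0 ω = z0)
    (hnat : ∀ t : ℕ, (ℱ t : MeasurableSpace Ω)
      = ⨆ s ∈ Set.Iic t, MeasurableSpace.comap (Z s) inferInstance)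
    (t : ℕ) :
    (∀ S S' : Fin t → Fin 3,
      ∫ ω, deltaZS Z t (trip ∘ S) ω * starRingEnd ℂ (deltaZS Z t (trip ∘ S') ω) ∂μ
        = if S = S' then 1 else 0) ∧
    (∀ f : Ω → ℂ, StronglyMeasurable[ℱ t] f → MemLp f 2 μ →
      ∃ c : (Fin t → Fin 3) → ℂ,
        f =ᵐ[μ] fun ω => ∑ S : Fin t → Fin 3, c S * deltaZS Z t (trip ∘ S) ω) := by
  have hcube : ∀ᵐ ω ∂μ, ∀ u, (Z (u + 1) ω - Z u ω) ^ 3 = 1 :=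
    ae_all_iff.mpr fun u => (hZ.2.2 u).mono fun ω hω => pow_three_eq_one_of_mem_steps hω
  have hdelta : ∀ᵐ ω ∂μ, ∀ S : Fin t → Fin 3,
      deltaZS Z t (trip ∘ S) ω = character S (increments Z t ω) :=
    hcube.mono fun ω hω => deltaZS_eq_character fun i => hω i
  refine ⟨fun S S' => ?_, fun f hf _ => ?_⟩
  · calc ∫ ω, deltaZS Z t (trip ∘ S) ω * conj (deltaZS Z t (trip ∘ S') ω) ∂μ
        = ∫ ω, character (S - S') (increments Z t ω) ∂μ := by
          refine integral_congr_ae ?_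
          filter_upwards [hcube, hdelta] with ω hω hδ
          rw [hδ, hδ, character_mul_conj_character (v := increments Z t ω) _ _ fun i => hω i]
      _ = if S = S' then 1 else 0 := by
          split_ifs with h
          · simp [h]
          · exact integral_character_increments_eq_zero hZ.1 hcube (sub_ne_zero.mpr h)
  · obtain ⟨g, -, rfl⟩ := (hf.mono ((hnat t).le.trans
      (iSup_comap_le_comap_increments hz0 t))).exists_eq_measurable_comp
    obtain ⟨c, hc⟩ := exists_eq_sum_character g
    refine ⟨c, ?_⟩
    filter_upwards [hcube, hdelta] with ω hω hδ
    simp only [Function.comp_apply, hδ]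
    exact hc _ fun i => hω i

end Parisian
end
end

section
/- Real form of the discrete Itô formula: for a real-valued function f : ℤ[ζ] → ℝ define the discrete derivative Df(z) := (2/3)·Σ_{j=0}^{2} ζ^j f(z + ζ^j) ∈ ℂ and the discrete Laplacian 𝔏f(z) := (1/3)·Σ_{j=0}^{2} ( f(z + ζ^j) − f(z) ) ∈ ℝ. Then for every z ∈ ℤ[ζ] and every w ∈ {1, ζ, ζ²}, f(z + w) − f(z) = Re(Df(z))·Re(w) + Im(Df(z))·Im(w) + 𝔏f(z). -/
open MeasureTheory Complex
open scoped Classical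

noncomputable section

namespace Parisian


lemma zeta_re : zeta.re = -1/2 := by
  simp [zeta, Complex.div_re, Complex.add_re, Complex.mul_re]

lemma zeta_im : zeta.im = Real.sqrt 3 / 2 := by
  simp [zeta, Complex.div_im, Complex.add_im, Complex.mul_im]

lemma zeta_sq_re : (zeta ^ 2).re = -1/2 := by
  have h3 : Real.sqrt 3 ^ 2 = 3 := Real.sq_sqrt (by norm_num)
  rw [sq, Complex.mul_re, zeta_re, zeta_im]
  nlinarith

lemma zeta_sq_im : (zeta ^ 2).im = -(Real.sqrt 3 / 2) := by
  rw [sq, Complex.mul_im, zeta_re, zeta_im]; ring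

/-- The discrete derivative `Df(z) = (2/3)·Σ_{j=0}^{2} ζ^j f(z + ζ^j)`. -/
def discDeriv (f : ℂ → ℝ) (z : ℂ) : ℂ :=
  (2 / 3 : ℂ) * ∑ j ∈ Finset.range 3, zeta ^ j * (f (z + zeta ^ j) : ℂ)

/-- The discrete Laplacian `𝔏f(z) = (1/3)·Σ_{j=0}^{2} (f(z + ζ^j) − f(z))`. -/
def discLap (f : ℂ → ℝ) (z : ℂ) : ℝ :=
  (1 / 3 : ℝ) * ∑ j ∈ Finset.range 3, (f (z + zeta ^ j) - f z)

/-- **Real form of the discrete Itô formula**: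
`f(z + w) − f(z) = Re(Df)·Re(w) + Im(Df)·Im(w) + 𝔏f(z)`. -/
theorem discrete_ito_formula_real (f : ℂ → ℝ) (z : ℂ) (hz : z ∈ Zlat)
    (w : ℂ) (hw : w ∈ steps) :
    f (z + w) - f z =
      (discDeriv f z).re * w.re + (discDeriv f z).im * w.im + discLap f z := by
  have h3 : Real.sqrt 3 ^ 2 = 3 := Real.sq_sqrt (by norm_num)
  have hd : discDeriv f z =
      (2 / 3 : ℂ) * ((f (z + 1) : ℂ) + zeta * (f (z + zeta) : ℂ)
        + zeta ^ 2 * (f (z + zeta ^ 2) : ℂ)) := by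
    simp [discDeriv, Finset.sum_range_succ]
  have hre : (discDeriv f z).re =
      (2/3) * (f (z + 1) + (-1/2) * f (z + zeta) + (-1/2) * f (z + zeta ^ 2)) := by
    rw [hd]
    simp [Complex.mul_re, Complex.add_re, Complex.add_im, Complex.mul_im,
      zeta_re, zeta_im, zeta_sq_re, zeta_sq_im]
  have him : (discDeriv f z).im =
      (2/3) * ((Real.sqrt 3 / 2) * f (z + zeta) - (Real.sqrt 3 / 2) * f (z + zeta ^ 2)) := by
    rw [hd]
    simp [Complex.mul_re, Complex.add_re, Complex.add_im, Complex.mul_im,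
      zeta_re, zeta_im, zeta_sq_re, zeta_sq_im]
    ring
  have hl : discLap f z =
      (1/3) * (f (z + 1) + f (z + zeta) + f (z + zeta ^ 2)) - f z := by
    simp [discLap, Finset.sum_range_succ]; ring
  rcases hw with hw | hw | hw <;> subst hw <;>
    rw [hre, him, hl] <;>
    simp only [Complex.one_re, Complex.one_im, zeta_re, zeta_im, zeta_sq_re, zeta_sq_im]
  · ring
  · linear_combination ((f (z + zeta ^ 2) - f (z + zeta)) / 6) * h3
  · linear_combination ((f (z + zeta) - f (z + zeta ^ 2)) / 6) * h3


end Parisian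
end
end

section
/- Partition by closed sextants: the six sets Ā₁, Ā₃, Ā₅, A₂, A₄, A₆ are pairwise disjoint and their union is all of ℤ[ζ]. -/
open MeasureTheory Complex
open scoped Classical

noncomputable section

namespace Parisian

lemma zeta_sq' : zeta ^ 2 = -1 - zeta := by
  have h : ((Real.sqrt 3 : ℝ) : ℂ)^2 = 3 := by
    norm_cast; rw [Real.sq_sqrt] <;> norm_num
  unfold zeta
  linear_combination (Complex.I^2/4) * h + (3/4) * Complex.I_sq

lemma rep_inj {a b a' b' : ℤ} (h : (a:ℂ) + b * zeta = (a':ℂ) + b' * zeta) :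
    a = a' ∧ b = b' := by
  have h3 : Real.sqrt 3 ≠ 0 := by positivity
  have him := congrArg Complex.im h
  have hre := congrArg Complex.re h
  simp [zeta, Complex.add_im, Complex.mul_im, Complex.add_re, Complex.mul_re,
    Complex.div_im, Complex.div_re] at him hre
  subst him
  refine ⟨?_, rfl⟩
  have : (a:ℝ) = a' := by linarith
  exact_mod_cast this

lemma char_Abar1 (z : ℂ) :
    z ∈ Abar1 ↔ ∃ a b : ℤ, z = (a:ℂ) + b * zeta ∧ 1 ≤ a ∧ b ≤ 0 := by
  constructor
  · rintro (((⟨k1, k2, rfl, h1, h2⟩ | ⟨n, rfl, hn⟩) | ⟨n, rfl, hn⟩) | rfl)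
    · exact ⟨k1 - k2, -k2, by push_cast; linear_combination (k2:ℂ) * zeta_sq',
        by omega, by omega⟩
    · exact ⟨n, 0, by push_cast; ring, by omega, by omega⟩
    · exact ⟨1, n, by push_cast; ring, by omega, by omega⟩
    · exact ⟨1, 0, by push_cast; ring, by omega, by omega⟩
  · rintro ⟨a, b, rfl, ha, hb⟩
    rcases eq_or_lt_of_le ha with ha1 | ha2
    · rcases eq_or_lt_of_le hb with hb0 | hb1
      · subst hb0; subst ha1
        right; simp only [Set.mem_singleton_iff]; push_cast; ring
      · subst ha1
        refine Or.inl (Or.inr ⟨b, ?_, by omega⟩); push_cast; ring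
    · rcases eq_or_lt_of_le hb with hb0 | hb1
      · subst hb0
        refine Or.inl (Or.inl (Or.inr ⟨a, ?_, by omega⟩)); push_cast; ring
      · refine Or.inl (Or.inl (Or.inl ⟨a - b, -b, ?_, by omega, by omega⟩))
        push_cast; linear_combination (b:ℂ) * zeta_sq'

lemma char_Abar3 (z : ℂ) :
    z ∈ Abar3 ↔ ∃ a b : ℤ, z = (a:ℂ) + b * zeta ∧ a ≤ b ∧ b ≤ 0 := by
  constructor
  · rintro (((⟨k1, k2, rfl, h1, h2⟩ | ⟨n, rfl, hn⟩) | ⟨n, rfl, hn⟩) | rfl)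
    · exact ⟨-k1, -k2, by push_cast; ring, by omega, by omega⟩
    · exact ⟨-n, -n, by push_cast; linear_combination (n:ℂ) * zeta_sq',
        by omega, by omega⟩
    · exact ⟨n, 0, by push_cast; ring, by omega, by omega⟩
    · exact ⟨0, 0, by push_cast; ring, by omega, by omega⟩
  · rintro ⟨a, b, rfl, ha, hb⟩
    rcases eq_or_lt_of_le hb with hb0 | hb1
    · subst hb0
      rcases eq_or_lt_of_le ha with ha1 | ha2
      · subst ha1
        right; simp only [Set.mem_singleton_iff]; push_cast; ring
      · refine Or.inl (Or.inr ⟨a, ?_, by omega⟩); push_cast; ring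
    · rcases eq_or_lt_of_le ha with ha1 | ha2
      · subst ha1
        refine Or.inl (Or.inl (Or.inr ⟨-a, ?_, by omega⟩))
        push_cast; linear_combination (a:ℂ) * zeta_sq'
      · refine Or.inl (Or.inl (Or.inl ⟨-a, -b, ?_, by omega, by omega⟩))
        push_cast; ring

lemma char_Abar5 (z : ℂ) :
    z ∈ Abar5 ↔ ∃ a b : ℤ, z = (a:ℂ) + b * zeta ∧ 1 ≤ a ∧ a ≤ b := by
  constructor
  · rintro (((⟨k1, k2, rfl, h1, h2⟩ | ⟨n, rfl, hn⟩) | ⟨n, rfl, hn⟩) | rfl)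
    · exact ⟨k1 - k2, k1, by push_cast; linear_combination (-k1:ℂ) * zeta_sq',
        by omega, by omega⟩
    · exact ⟨1, n + 1, by push_cast; linear_combination (-1:ℂ) * zeta_sq',
        by omega, by omega⟩
    · exact ⟨-n, -n, by push_cast; linear_combination (n:ℂ) * zeta_sq',
        by omega, by omega⟩
    · exact ⟨1, 1, by push_cast; ring, by omega, by omega⟩
  · rintro ⟨a, b, rfl, ha, hab⟩
    rcases eq_or_lt_of_le ha with ha1 | ha2
    · rcases eq_or_lt_of_le hab with hb1 | hb2
      · subst hb1; subst ha1
        right; simp only [Set.mem_singleton_iff]; push_cast; ring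
      · subst ha1
        refine Or.inl (Or.inl (Or.inr ⟨b - 1, ?_, by omega⟩))
        push_cast; linear_combination zeta_sq'
    · rcases eq_or_lt_of_le hab with hb1 | hb2
      · subst hb1
        refine Or.inl (Or.inr ⟨-a, ?_, by omega⟩)
        push_cast; linear_combination (a:ℂ) * zeta_sq'
      · refine Or.inl (Or.inl (Or.inl ⟨b, b - a, ?_, by omega, by omega⟩))
        push_cast; linear_combination (b:ℂ) * zeta_sq'

lemma char_A2 (z : ℂ) :
    z ∈ A2 ↔ ∃ a b : ℤ, z = (a:ℂ) + b * zeta ∧ b < a ∧ a ≤ 0 := by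
  constructor
  · rintro ⟨k1, k2, rfl, h1, h2⟩
    exact ⟨-k2, -k1, by push_cast; ring, by omega, by omega⟩
  · rintro ⟨a, b, rfl, h1, h2⟩
    exact ⟨-b, -a, by push_cast; ring, by omega, by omega⟩

lemma char_A4 (z : ℂ) :
    z ∈ A4 ↔ ∃ a b : ℤ, z = (a:ℂ) + b * zeta ∧ a ≤ 0 ∧ 1 ≤ b := by
  constructor
  · rintro ⟨k1, k2, rfl, h1, h2⟩
    exact ⟨-k2, k1 - k2, by push_cast; linear_combination (k2:ℂ) * zeta_sq',
      by omega, by omega⟩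
  · rintro ⟨a, b, rfl, h1, h2⟩
    exact ⟨b - a, -a, by push_cast; linear_combination (a:ℂ) * zeta_sq',
      by omega, by omega⟩

lemma char_A6 (z : ℂ) :
    z ∈ A6 ↔ ∃ a b : ℤ, z = (a:ℂ) + b * zeta ∧ 1 ≤ b ∧ b < a := by
  constructor
  · rintro ⟨k1, k2, rfl, h1, h2⟩
    exact ⟨k1, k2, by push_cast; ring, by omega, by omega⟩
  · rintro ⟨a, b, rfl, h1, h2⟩
    exact ⟨a, b, by push_cast; ring, by omega, by omega⟩

lemma disj_of {S T : Set ℂ} {P Q : ℤ → ℤ → Prop}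
    (hS : ∀ z, z ∈ S ↔ ∃ a b : ℤ, z = (a:ℂ) + b * zeta ∧ P a b)
    (hT : ∀ z, z ∈ T ↔ ∃ a b : ℤ, z = (a:ℂ) + b * zeta ∧ Q a b)
    (h : ∀ a b, P a b → Q a b → False) : Disjoint S T := by
  rw [Set.disjoint_left]
  intro z hzS hzT
  obtain ⟨a, b, rfl, hP⟩ := (hS z).mp hzS
  obtain ⟨a', b', he, hQ⟩ := (hT _).mp hzT
  obtain ⟨rfl, rfl⟩ := rep_inj he
  exact h a b hP hQ
/-- **Partition by closed sextants**: `Ā₁, Ā₃, Ā₅, A₂, A₄, A₆` are pairwise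
disjoint and their union is `ℤ[ζ]`. -/
theorem partition_by_closed_sextants
    (G : Fin 6 → Set ℂ) (hG : G = ![Abar1, Abar3, Abar5, A2, A4, A6]) :
    Pairwise (Function.onFun Disjoint G) ∧ (⋃ i, G i) = Zlat := by
  have d12 := disj_of char_Abar1 char_Abar3 (fun a b h1 h2 => by omega)
  have d13 := disj_of char_Abar1 char_Abar5 (fun a b h1 h2 => by omega)
  have d14 := disj_of char_Abar1 char_A2 (fun a b h1 h2 => by omega)
  have d15 := disj_of char_Abar1 char_A4 (fun a b h1 h2 => by omega)
  have d16 := disj_of char_Abar1 char_A6 (fun a b h1 h2 => by omega)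
  have d23 := disj_of char_Abar3 char_Abar5 (fun a b h1 h2 => by omega)
  have d24 := disj_of char_Abar3 char_A2 (fun a b h1 h2 => by omega)
  have d25 := disj_of char_Abar3 char_A4 (fun a b h1 h2 => by omega)
  have d26 := disj_of char_Abar3 char_A6 (fun a b h1 h2 => by omega)
  have d34 := disj_of char_Abar5 char_A2 (fun a b h1 h2 => by omega)
  have d35 := disj_of char_Abar5 char_A4 (fun a b h1 h2 => by omega)
  have d36 := disj_of char_Abar5 char_A6 (fun a b h1 h2 => by omega)
  have d45 := disj_of char_A2 char_A4 (fun a b h1 h2 => by omega)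
  have d46 := disj_of char_A2 char_A6 (fun a b h1 h2 => by omega)
  have d56 := disj_of char_A4 char_A6 (fun a b h1 h2 => by omega)
  subst hG
  constructor
  · intro i j hij
    fin_cases i <;> fin_cases j <;>
      first
        | exact absurd rfl hij
        | exact d12 | exact d12.symm | exact d13 | exact d13.symm
        | exact d14 | exact d14.symm | exact d15 | exact d15.symm
        | exact d16 | exact d16.symm | exact d23 | exact d23.symm
        | exact d24 | exact d24.symm | exact d25 | exact d25.symm
        | exact d26 | exact d26.symm | exact d34 | exact d34.symm
        | exact d35 | exact d35.symm | exact d36 | exact d36.symm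
        | exact d45 | exact d45.symm | exact d46 | exact d46.symm
        | exact d56 | exact d56.symm
  · apply Set.Subset.antisymm
    · apply Set.iUnion_subset
      intro i
      fin_cases i <;> intro z hz
      · obtain ⟨a, b, rfl, -⟩ := (char_Abar1 z).mp hz; exact ⟨a, b, rfl⟩
      · obtain ⟨a, b, rfl, -⟩ := (char_Abar3 z).mp hz; exact ⟨a, b, rfl⟩
      · obtain ⟨a, b, rfl, -⟩ := (char_Abar5 z).mp hz; exact ⟨a, b, rfl⟩
      · obtain ⟨a, b, rfl, -⟩ := (char_A2 z).mp hz; exact ⟨a, b, rfl⟩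
      · obtain ⟨a, b, rfl, -⟩ := (char_A4 z).mp hz; exact ⟨a, b, rfl⟩
      · obtain ⟨a, b, rfl, -⟩ := (char_A6 z).mp hz; exact ⟨a, b, rfl⟩
    · rintro z ⟨a, b, rfl⟩
      rcases le_or_gt a 0 with ha | ha
      · rcases le_or_gt b 0 with hb | hb
        · rcases le_or_gt a b with h | h
          · exact Set.mem_iUnion.mpr
              ⟨1, (char_Abar3 _).mpr ⟨a, b, rfl, by omega, by omega⟩⟩
          · exact Set.mem_iUnion.mpr
              ⟨3, (char_A2 _).mpr ⟨a, b, rfl, by omega, by omega⟩⟩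
        · exact Set.mem_iUnion.mpr
            ⟨4, (char_A4 _).mpr ⟨a, b, rfl, by omega, by omega⟩⟩
      · rcases le_or_gt b 0 with hb | hb
        · exact Set.mem_iUnion.mpr
            ⟨0, (char_Abar1 _).mpr ⟨a, b, rfl, by omega, by omega⟩⟩
        · rcases le_or_gt a b with h | h
          · exact Set.mem_iUnion.mpr
              ⟨2, (char_Abar5 _).mpr ⟨a, b, rfl, by omega, by omega⟩⟩
          · exact Set.mem_iUnion.mpr
              ⟨5, (char_A6 _).mpr ⟨a, b, rfl, by omega, by omega⟩⟩

end Parisian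
end
end
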